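/- For every p ≥ 1, all ζ, α ∈ Z₂^p, and every real θ, the matrix exponential of the phased spinor satisfies exp(i·θ·(−i)^{ν(ζ,α)}·S^ζ_α) = cos θ · I + i·sin θ · (−i)^{ν(ζ,α)}·S^ζ_α, where I is the 2^p × 2^p identity matrix and exp is the matrix exponential. -/

import Mathlib

open Matrix

/-- `Z₂^p`, the binary strings of length `p`. -/
abbrev Z2 (p : ℕ) : Type := Fin p → ZMod 2

/-- Inner product of two binary strings, valued in `ZMod 2`. -/
def dotp {p : ℕ} (ζ γ : Z2 p) : ZMod 2 := ∑ i, ζ i * γ i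

/-- `(-1)^x` for `x : ZMod 2`, as a complex number. -/
noncomputable def sgn (x : ZMod 2) : ℂ := if x = 0 then 1 else -1

/-- The spinor `S^ζ_α`: the `2^p × 2^p` complex matrix with `(γ, β)` entry
`(-1)^{ζ·γ}` if `γ = β + α` and `0` otherwise. -/
noncomputable def Spinor {p : ℕ} (ζ α : Z2 p) : Matrix (Z2 p) (Z2 p) ℂ :=
  Matrix.of fun γ β => if γ = β + α then sgn (dotp ζ γ) else 0

/-- `ν(ζ,α)`: the number of indices `i` with `ζ i = 1` and `α i = 1`. -/
def nu {p : ℕ} (ζ α : Z2 p) : ℕ :=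
  (Finset.univ.filter fun i => ζ i = 1 ∧ α i = 1).card

/-!
Since `S^ζ_α` permutes the basis by translation by `α` (an involution of `Z₂^p`) up to signs,
its square is the scalar `(-1)^{ζ·α} = (-1)^{ν(ζ,α)}`, which the phase `(-i)^{ν(ζ,α)}` cancels.
So `M = (-i)^{ν(ζ,α)} S^ζ_α` satisfies `M² = 1`, and splitting the exponential series of
`iθM` into even and odd terms gives `cosh (iθ) + sinh (iθ) M = cos θ + i sin θ M`.
-/

open NormedSpace in
theorem exp_smul_of_mul_self_eq_one {A : Type*} [NormedRing A] [NormedAlgebra ℂ A]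
    [CompleteSpace A] {M : A} (hM : M * M = 1) (z : ℂ) :
    exp (z • M) = Complex.cosh z • (1 : A) + Complex.sinh z • M := by
  have hM_even (k : ℕ) : M ^ (2 * k) = 1 := by rw [pow_mul, sq, hM, one_pow]
  have hM_odd (k : ℕ) : M ^ (2 * k + 1) = M := by rw [pow_succ, hM_even, one_mul]
  refine (exp_series_hasSum_exp' (𝕂 := ℂ) (z • M)).unique (.even_add_odd ?_ ?_)
  · convert (Complex.hasSum_cosh z).smul_const (1 : A) using 2 with k
    rw [smul_pow, hM_even, smul_smul, div_eq_inv_mul]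
  · convert (Complex.hasSum_sinh z).smul_const M using 2 with k
    rw [smul_pow, hM_odd, smul_smul, div_eq_inv_mul]

lemma sgn_add (a b : ZMod 2) : sgn (a + b) = sgn a * sgn b := by
  have h_zero_iff : a + b = 0 ↔ (a = 0 ↔ b = 0) := by decide +revert
  by_cases ha : a = 0 <;> by_cases hb : b = 0 <;> simp [sgn, h_zero_iff, ha, hb]

lemma sgn_mul_self (a : ZMod 2) : sgn a * sgn a = 1 := by
  rw [← sgn_add, CharTwo.add_self_eq_zero, sgn, if_pos rfl]

lemma sgn_natCast (n : ℕ) : sgn n = (-1) ^ n := by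
  induction n with
  | zero => simp [sgn]
  | succ n ih => rw [Nat.cast_succ, sgn_add, ih, pow_succ, sgn, if_neg one_ne_zero]

lemma dotp_add_right {p : ℕ} (ζ γ α : Z2 p) : dotp ζ (γ + α) = dotp ζ γ + dotp ζ α := by
  simp only [dotp, Pi.add_apply, mul_add, Finset.sum_add_distrib]

lemma dotp_eq_nu {p : ℕ} (ζ α : Z2 p) : dotp ζ α = nu ζ α := by
  have h_mul (a b : ZMod 2) : a * b = ((if a = 1 ∧ b = 1 then 1 else 0 : ℕ) : ZMod 2) := by
    decide +revert
  rw [dotp, nu, Finset.card_filter, Nat.cast_sum]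
  exact Finset.sum_congr rfl fun i _ => h_mul _ _

lemma Spinor_mul_self {p : ℕ} (ζ α : Z2 p) :
    Spinor ζ α * Spinor ζ α = (-1 : ℂ) ^ nu ζ α • (1 : Matrix (Z2 p) (Z2 p) ℂ) := by
  ext γ β
  simp only [mul_apply, Spinor, of_apply, Matrix.smul_apply, one_apply]
  rw [Finset.sum_eq_single (β + α) (fun δ _ hδ => by simp [hδ]) (by simp),
    add_assoc, ZModModule.add_self, add_zero]
  by_cases h : γ = β
  · subst h
    rw [if_pos rfl, if_pos rfl, if_pos rfl, dotp_add_right, sgn_add, ← mul_assoc, sgn_mul_self,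
      one_mul, dotp_eq_nu, sgn_natCast, smul_eq_mul, mul_one]
  · simp [h]

lemma neg_I_pow_nu_smul_Spinor_mul_self {p : ℕ} (ζ α : Z2 p) :
    ((-Complex.I) ^ nu ζ α • Spinor ζ α) * ((-Complex.I) ^ nu ζ α • Spinor ζ α) = 1 := by
  rw [smul_mul_smul_comm, Spinor_mul_self, smul_smul, ← mul_pow, ← mul_pow]
  simp

-- `exp` depends only on the topology, so any Banach-algebra norm on matrices will do.
attribute [local instance] Matrix.linftyOpNormedRing Matrix.linftyOpNormedAlgebra

theorem sRotation_eq_general {p : ℕ} (ζ α : Z2 p) (θ : ℝ) :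
    NormedSpace.exp ((Complex.I * θ * (-Complex.I) ^ nu ζ α) • Spinor ζ α) =
      (Real.cos θ : ℂ) • (1 : Matrix (Z2 p) (Z2 p) ℂ) +
        (Complex.I * Real.sin θ * (-Complex.I) ^ nu ζ α) • Spinor ζ α := by
  rw [mul_smul _ ((-Complex.I) ^ _), mul_smul _ ((-Complex.I) ^ _), mul_comm Complex.I]
  refine (exp_smul_of_mul_self_eq_one (neg_I_pow_nu_smul_Spinor_mul_self ζ α) _).trans ?_
  rw [Complex.cosh_mul_I, Complex.sinh_mul_I, Complex.ofReal_cos, Complex.ofReal_sin,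
    mul_comm (Complex.sin θ)]

/-- The s-rotation: `exp(iθ (-i)^{ν(ζ,α)} S^ζ_α) = cos θ · I + i sin θ (-i)^{ν(ζ,α)} S^ζ_α`. -/
theorem sRotation_eq {p : ℕ} (hp : 1 ≤ p) (ζ α : Z2 p) (θ : ℝ) :
    NormedSpace.exp ((Complex.I * θ * (-Complex.I) ^ nu ζ α) • Spinor ζ α) =
      (Real.cos θ : ℂ) • (1 : Matrix (Z2 p) (Z2 p) ℂ) +
        (Complex.I * Real.sin θ * (-Complex.I) ^ nu ζ α) • Spinor ζ α :=
  sRotation_eq_general ζ α θ
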